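/- The Cygan inversion I(ζ, v, u) = (ζ / (-|ζ|² + i v - u), -v / | -|ζ|² + i v - u |², u / | -|ζ|² + i v - u |²) satisfies ρ(I(p), o) = 1 / ρ(p, o) for every p ≠ o in ℂ × ℝ × ℝ≥0, where o = (0, 0, 0). -/

import Mathlib

open Complex

/-- The Cygan metric on `ℂ × ℝ × ℝ` (third coordinate is the height `u ≥ 0`). -/
noncomputable def cygan (p q : ℂ × ℝ × ℝ) : ℝ :=
  Real.sqrt (norm
    ((((norm (p.1 - q.1)) ^ 2 + |p.2.2 - q.2.2| : ℝ) : ℂ)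
      - Complex.I * (p.2.1 : ℂ) + Complex.I * (q.2.1 : ℂ)
      - 2 * Complex.I * (((p.1 * (starRingEnd ℂ) q.1).im : ℝ) : ℂ)))

/-- Heisenberg group multiplication on `ℂ × ℝ`. -/
noncomputable def hmul (p q : ℂ × ℝ) : ℂ × ℝ :=
  (p.1 + q.1, p.2 + q.2 + 2 * ((starRingEnd ℂ) q.1 * p.1).im)

/-- The Korányi gauge on `ℂ × ℝ`. -/
noncomputable def hgauge (p : ℂ × ℝ) : ℝ :=
  Real.sqrt (norm ((-((norm p.1) ^ 2 : ℝ) : ℂ) + Complex.I * (p.2 : ℂ)))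

/-- The Heisenberg (Korányi–Cygan) metric on `ℂ × ℝ`. -/
noncomputable def hdist (p q : ℂ × ℝ) : ℝ :=
  hgauge (hmul (-p.1, -p.2) q)

/-- Heisenberg inversion on `ℂ × ℝ`. -/
noncomputable def hinv (p : ℂ × ℝ) : ℂ × ℝ :=
  ((p.1 / ((-((norm p.1) ^ 2 : ℝ) : ℂ) + Complex.I * (p.2 : ℂ))),
    -p.2 / (norm ((-((norm p.1) ^ 2 : ℝ) : ℂ) + Complex.I * (p.2 : ℂ))) ^ 2)

/-- Cygan inversion on `ℂ × ℝ × ℝ`. -/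
noncomputable def cinv (p : ℂ × ℝ × ℝ) : ℂ × ℝ × ℝ :=
  (p.1 / ((-((norm p.1) ^ 2 : ℝ) : ℂ) + Complex.I * (p.2.1 : ℂ) - (p.2.2 : ℂ)),
    -p.2.1 / (norm ((-((norm p.1) ^ 2 : ℝ) : ℂ) + Complex.I * (p.2.1 : ℂ) - (p.2.2 : ℂ))) ^ 2,
    p.2.2 / (norm ((-((norm p.1) ^ 2 : ℝ) : ℂ) + Complex.I * (p.2.1 : ℂ) - (p.2.2 : ℂ))) ^ 2)

/-!
Write `w = -|ζ|² + i v - u` for the common denominator of the inversion. For `u ≥ 0` the Cygan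
expression of `p` against the origin is `|ζ|² + u - i v = -w`, while that of `I(p)` is
`(|ζ|² + u + i v) / |w|² = -conj w / |w|² = -w⁻¹`; hence `ρ(I(p), o)² = |w|⁻¹ = ρ(p, o)⁻²`.
-/

open ComplexConjugate

noncomputable def cinvDenom (p : ℂ × ℝ × ℝ) : ℂ :=
  (-(‖p.1‖ ^ 2 : ℝ) : ℂ) + I * p.2.1 - p.2.2

theorem cinv_eq (p : ℂ × ℝ × ℝ) :
    cinv p = (p.1 / cinvDenom p, -p.2.1 / ‖cinvDenom p‖ ^ 2, p.2.2 / ‖cinvDenom p‖ ^ 2) :=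
  rfl

theorem conj_cinvDenom (p : ℂ × ℝ × ℝ) :
    conj (cinvDenom p) = -(((‖p.1‖ ^ 2 + p.2.2 : ℝ) : ℂ) + I * p.2.1) := by
  simp [cinvDenom]
  ring

theorem cygan_zero_right (p : ℂ × ℝ × ℝ) :
    cygan p (0, 0, 0) = √‖((‖p.1‖ ^ 2 + |p.2.2| : ℝ) : ℂ) - I * p.2.1‖ := by
  simp [cygan]

theorem cygan_zero_right_of_nonneg {p : ℂ × ℝ × ℝ} (hu : 0 ≤ p.2.2) :
    cygan p (0, 0, 0) = √‖cinvDenom p‖ := by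
  rw [cygan_zero_right, ← norm_neg (cinvDenom p), cinvDenom, abs_of_nonneg hu]
  push_cast
  congr 2
  ring

theorem cygan_cinv_zero_right {p : ℂ × ℝ × ℝ} (hu : 0 ≤ p.2.2) :
    cygan (cinv p) (0, 0, 0) = √‖(cinvDenom p)⁻¹‖ := by
  rw [cygan_zero_right, cinv_eq, ← norm_neg, Complex.inv_def, Complex.normSq_eq_norm_sq,
    conj_cinvDenom]
  simp only [norm_div, div_pow, abs_div, abs_of_nonneg hu, abs_pow, abs_norm]
  push_cast
  congr 2
  ring

theorem cygan_cinv_zero_general (p : ℂ × ℝ × ℝ) (hp0 : 0 ≤ p.2.2) :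
    cygan (cinv p) (0, 0, 0) = 1 / cygan p (0, 0, 0) := by
  rw [cygan_cinv_zero_right hp0, cygan_zero_right_of_nonneg hp0, norm_inv, Real.sqrt_inv,
    one_div]

theorem cygan_cinv_zero (p : ℂ × ℝ × ℝ) (hp0 : 0 ≤ p.2.2)
    (hp : p ≠ (0, 0, 0)) :
    cygan (cinv p) (0, 0, 0) = 1 / cygan p (0, 0, 0) :=
  cygan_cinv_zero_general p hp0
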